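/- For the symmetric tridiagonal matrices A_t^n + (A_t^n)^T with diagonal entries 2i(s_t - (i-1) - m_t) for i < n, last diagonal entry -2n((n-1)+m_t), and off-diagonal entries b_t^i = s_t i(1 - m_t p_t/(i-1)) - (i-1)^2, the eigenvalues of ∫_x^t (A_u^n + (A_u^n)^T) du are bounded above by a constant independent of n. -/
import Mathlib

set_option maxHeartbeats 1000000


open Set intervalIntegral

/-- Sum over `Fin n` of an indicator at value `v`. -/
lemma sum_ite_fin_val (n v : ℕ) (c : ℝ) :
    (∑ j : Fin n, if (j : ℕ) = v then c else 0) = if v < n then c else 0 := by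
  rcases lt_or_ge v n with h | h
  · rw [if_pos h]
    have hc : ∀ j : Fin n, ((j : ℕ) = v) = (j = ⟨v, h⟩) := by
      intro j; simp [Fin.ext_iff]
    simp only [hc]
    simp
  · rw [if_neg (not_lt.mpr h)]
    apply Finset.sum_eq_zero
    intro j _
    rw [if_neg]
    omega

/-- The coefficient `(r+1)/r` is bounded by 2 in absolute value (as a nat cast). -/
lemma coeff_abs_le (r : ℕ) (τ : ℝ) : |((r : ℝ) + 1) / (r : ℝ) * τ| ≤ 2 * |τ| := by
  rw [abs_mul]
  have h : |((r : ℝ) + 1) / (r : ℝ)| ≤ 2 := by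
    rcases r with _ | r
    · simp
    · rw [abs_of_nonneg (by positivity), div_le_iff₀ (by positivity)]
      push_cast; linarith
  exact mul_le_mul_of_nonneg_right h (abs_nonneg τ)

/-- Integral of a linear combination of continuous functions. -/
lemma integral_comb (s g m : ℝ → ℝ) (hs : Continuous s) (hg : Continuous g)
    (hm : Continuous m) (c₁ c₂ c₃ c₄ x t : ℝ) :
    (∫ u in x..t, (c₁ * s u + (c₂ * g u + (c₃ * m u + c₄)))) =
      c₁ * (∫ u in x..t, s u) + (c₂ * (∫ u in x..t, g u) +
        (c₃ * (∫ u in x..t, m u) + c₄ * (t - x))) := by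
  have i1 : IntervalIntegrable (fun u => c₁ * s u) MeasureTheory.volume x t :=
    (continuous_const.mul hs).intervalIntegrable x t
  have i2 : IntervalIntegrable (fun u => c₂ * g u) MeasureTheory.volume x t :=
    (continuous_const.mul hg).intervalIntegrable x t
  have i3 : IntervalIntegrable (fun u => c₃ * m u) MeasureTheory.volume x t :=
    (continuous_const.mul hm).intervalIntegrable x t
  have i4 : IntervalIntegrable (fun _ : ℝ => c₄) MeasureTheory.volume x t :=
    intervalIntegrable_const
  rw [integral_add i1 (i2.add (i3.add i4)), integral_add i2 (i3.add i4),
    integral_add i3 i4, integral_const_mul, integral_const_mul, integral_const_mul,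
    integral_const, smul_eq_mul]
  ring

/-- The eigenvalues of the integrated symmetrized tridiagonal matrices
`∫_x^t (A_u^n + (A_u^n)^T) du` (with 1-based diagonal entries `2i(s - (i-1) - m)`,
last diagonal entry `-2n((n-1)+m)`, off-diagonal entries
`b^i = s·i·(1 - m p/(i-1)) - (i-1)²` at positions `(i,i+1)` and `(i+1,i)`)
are bounded above by a constant independent of `n`. -/
theorem gershgorin_eigenvalue_bound (T : ℝ) (hT : 0 < T)
    (s m p : ℝ → ℝ)
    (hm : ∀ u, 0 ≤ m u) (hp : ∀ u, p u ∈ Icc (0 : ℝ) 1)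
    (hscont : Continuous s) (hmcont : Continuous m) (hpcont : Continuous p)
    (x t : ℝ) (hx : 0 ≤ x) (hxt : x ≤ t) (htT : t ≤ T) :
    ∃ C : ℝ, ∀ n : ℕ, ∀ lam ∈ spectrum ℝ (Matrix.of fun i j : Fin n =>
      if (i : ℕ) = (j : ℕ) then
        (if (i : ℕ) + 1 < n then
          ∫ u in x..t, 2 * ((i : ℕ) + 1 : ℝ) * (s u - (((i : ℕ) + 1 : ℝ) - 1) - m u)
        else
          ∫ u in x..t, -(2 * ((i : ℕ) + 1 : ℝ) * ((((i : ℕ) + 1 : ℝ) - 1) + m u)))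
      else if (i : ℕ) + 1 = (j : ℕ) then
        ∫ u in x..t,
          (s u * ((i : ℕ) + 1 : ℝ) * (1 - m u * p u / (((i : ℕ) + 1 : ℝ) - 1))
            - (((i : ℕ) + 1 : ℝ) - 1) ^ 2)
      else if (j : ℕ) + 1 = (i : ℕ) then
        ∫ u in x..t,
          (s u * ((j : ℕ) + 1 : ℝ) * (1 - m u * p u / (((j : ℕ) + 1 : ℝ) - 1))
            - (((j : ℕ) + 1 : ℝ) - 1) ^ 2)
      else 0), lam ≤ C := by
  -- bounds on s and m
  obtain ⟨S₀, hS₀⟩ := isCompact_uIcc.exists_bound_of_continuousOn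
    (hscont.continuousOn (s := uIcc x t))
  obtain ⟨M₀, hM₀⟩ := isCompact_uIcc.exists_bound_of_continuousOn
    (hmcont.continuousOn (s := uIcc x t))
  set S : ℝ := max S₀ 0 with hSdef
  set M : ℝ := max M₀ 0 with hMdef
  have hS0 : 0 ≤ S := le_max_right _ _
  have hM0 : 0 ≤ M := le_max_right _ _
  have hSb : ∀ u ∈ uIcc x t, |s u| ≤ S := fun u hu =>
    le_trans (hS₀ u hu) (le_max_left _ _)
  have hMb : ∀ u ∈ uIcc x t, |m u| ≤ M := fun u hu =>
    le_trans (hM₀ u hu) (le_max_left _ _)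
  set L : ℝ := t - x with hLdef
  have hL : 0 ≤ L := by rw [hLdef]; linarith
  set σ : ℝ := ∫ u in x..t, s u with hσdef
  set τ : ℝ := ∫ u in x..t, s u * (m u * p u) with hτdef
  set μ : ℝ := ∫ u in x..t, m u with hμdef
  have habsL : |t - x| = L := abs_of_nonneg hL
  have hσb : |σ| ≤ S * L := by
    rw [hσdef, ← Real.norm_eq_abs]
    calc ‖∫ u in x..t, s u‖ ≤ S * |t - x| := by
          apply norm_integral_le_of_norm_le_const
          intro u hu
          exact le_trans (le_of_eq (Real.norm_eq_abs _)) (hSb u (uIoc_subset_uIcc hu))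
      _ = S * L := by rw [habsL]
  have hτb : |τ| ≤ S * M * L := by
    rw [hτdef, ← Real.norm_eq_abs]
    calc ‖∫ u in x..t, s u * (m u * p u)‖ ≤ S * M * |t - x| := by
          apply norm_integral_le_of_norm_le_const
          intro u hu
          have hu' := uIoc_subset_uIcc hu
          have hp1 : |p u| ≤ 1 := by
            rw [abs_of_nonneg (hp u).1]; exact (hp u).2
          calc ‖s u * (m u * p u)‖ = |s u| * (|m u| * |p u|) := by
                rw [Real.norm_eq_abs, abs_mul, abs_mul]
            _ ≤ S * (M * 1) := by
                apply mul_le_mul (hSb u hu') _ (by positivity) hS0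
                exact mul_le_mul (hMb u hu') hp1 (abs_nonneg _) hM0
            _ = S * M := by ring
      _ = S * M * L := by rw [habsL]
  have hμ0 : 0 ≤ μ := by
    rw [hμdef]
    exact intervalIntegral.integral_nonneg hxt (fun u _ => hm u)
  obtain ⟨hσ1, hσ2⟩ : -(S * L) ≤ σ ∧ σ ≤ S * L := abs_le.mp hσb
  refine ⟨(S ^ 2 + 3 * S + 2 + 4 * S * M) * L, ?_⟩
  intro n lam hlam
  set A : Matrix (Fin n) (Fin n) ℝ := Matrix.of (fun i j : Fin n =>
      if (i : ℕ) = (j : ℕ) then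
        (if (i : ℕ) + 1 < n then
          ∫ u in x..t, 2 * ((i : ℕ) + 1 : ℝ) * (s u - (((i : ℕ) + 1 : ℝ) - 1) - m u)
        else
          ∫ u in x..t, -(2 * ((i : ℕ) + 1 : ℝ) * ((((i : ℕ) + 1 : ℝ) - 1) + m u)))
      else if (i : ℕ) + 1 = (j : ℕ) then
        ∫ u in x..t,
          (s u * ((i : ℕ) + 1 : ℝ) * (1 - m u * p u / (((i : ℕ) + 1 : ℝ) - 1))
            - (((i : ℕ) + 1 : ℝ) - 1) ^ 2)
      else if (j : ℕ) + 1 = (i : ℕ) then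
        ∫ u in x..t,
          (s u * ((j : ℕ) + 1 : ℝ) * (1 - m u * p u / (((j : ℕ) + 1 : ℝ) - 1))
            - (((j : ℕ) + 1 : ℝ) - 1) ^ 2)
      else 0) with hA
  -- Gershgorin
  have hEig : Module.End.HasEigenvalue (Matrix.toLin' A) lam := by
    rw [Module.End.hasEigenvalue_iff_mem_spectrum]
    have h2 : Matrix.toLin' A = Matrix.toLinAlgEquiv' A := rfl
    rw [h2, AlgEquiv.spectrum_eq]
    exact hlam
  obtain ⟨k, hk⟩ := eigenvalue_mem_ball hEig
  rw [Metric.mem_closedBall, Real.dist_eq] at hk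
  have hlam_le : lam ≤ A k k + ∑ j ∈ Finset.univ.erase k, ‖A k j‖ := by
    have h3 := le_trans (le_abs_self (lam - A k k)) hk
    linarith
  -- off-diagonal entry values
  set V : ℕ → ℝ := fun r =>
    ((r : ℝ) + 1) * σ - ((r : ℝ) + 1) / (r : ℝ) * τ - (r : ℝ) ^ 2 * L with hV
  have hoff : ∀ r : ℕ,
      (∫ u in x..t, (s u * ((r : ℝ) + 1) * (1 - m u * p u / (((r : ℝ) + 1) - 1))
          - (((r : ℝ) + 1) - 1) ^ 2)) = V r := by
    intro r
    have hcongr : (∫ u in x..t, (s u * ((r : ℝ) + 1) * (1 - m u * p u / (((r : ℝ) + 1) - 1))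
          - (((r : ℝ) + 1) - 1) ^ 2)) =
        ∫ u in x..t, (((r : ℝ) + 1) * s u +
          ((-(((r : ℝ) + 1) / (r : ℝ))) * (s u * (m u * p u)) +
            (0 * m u + (-(r : ℝ) ^ 2)))) :=
      integral_congr (fun u _ => by ring)
    rw [hcongr, integral_comb s _ m hscont (by fun_prop) hmcont, ← hσdef, ← hτdef,
      ← hμdef, ← hLdef]
    simp only [hV]
    ring
  set K : ℝ := ((k : ℕ) : ℝ) with hK
  have hK0 : (0 : ℝ) ≤ K := Nat.cast_nonneg _
  have hVk : V (k : ℕ) = (K + 1) * σ - (K + 1) / K * τ - K ^ 2 * L := by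
    simp only [hV, hK]
  have he1 := abs_le.mp (le_trans (coeff_abs_le (k : ℕ) τ) (by linarith : 2 * |τ| ≤ 2 * (S * M * L)))
  rw [← hK] at he1
  -- diagonal entry values
  have hI1 : (∫ u in x..t, 2 * (((k : ℕ) : ℝ) + 1) * (s u - ((((k : ℕ) : ℝ) + 1) - 1) - m u)) =
      2 * (K + 1) * σ - 2 * (K + 1) * μ - 2 * (K + 1) * K * L := by
    have hcongr : (∫ u in x..t, 2 * (((k : ℕ) : ℝ) + 1) * (s u - ((((k : ℕ) : ℝ) + 1) - 1) - m u)) =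
        ∫ u in x..t, ((2 * (((k : ℕ) : ℝ) + 1)) * s u +
          (0 * (s u * (m u * p u)) +
            ((-(2 * (((k : ℕ) : ℝ) + 1))) * m u + (-(2 * (((k : ℕ) : ℝ) + 1) * ((k : ℕ) : ℝ)))))) :=
      integral_congr (fun u _ => by ring)
    rw [hcongr, integral_comb s _ m hscont (by fun_prop) hmcont, ← hσdef, ← hτdef,
      ← hμdef, ← hLdef, ← hK]
    ring
  have hI2 : (∫ u in x..t, -(2 * (((k : ℕ) : ℝ) + 1) * (((((k : ℕ) : ℝ) + 1) - 1) + m u))) =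
      -(2 * (K + 1) * μ) - 2 * (K + 1) * K * L := by
    have hcongr : (∫ u in x..t, -(2 * (((k : ℕ) : ℝ) + 1) * (((((k : ℕ) : ℝ) + 1) - 1) + m u))) =
        ∫ u in x..t, ((0 : ℝ) * s u +
          (0 * (s u * (m u * p u)) +
            ((-(2 * (((k : ℕ) : ℝ) + 1))) * m u + (-(2 * (((k : ℕ) : ℝ) + 1) * ((k : ℕ) : ℝ)))))) :=
      integral_congr (fun u _ => by ring)
    rw [hcongr, integral_comb s _ m hscont (by fun_prop) hmcont, ← hσdef, ← hτdef,
      ← hμdef, ← hLdef, ← hK]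
    ring
  -- row sum bound
  have hrow : (∑ j ∈ Finset.univ.erase k, ‖A k j‖) ≤
      (if (k : ℕ) + 1 < n then |V (k : ℕ)| else 0) +
        (if 1 ≤ (k : ℕ) then |V ((k : ℕ) - 1)| else 0) := by
    have hstep : ∀ j ∈ Finset.univ.erase k, ‖A k j‖ ≤
        ((if (j : ℕ) = (k : ℕ) + 1 then |V (k : ℕ)| else 0) +
          (if (j : ℕ) + 1 = (k : ℕ) then |V ((k : ℕ) - 1)| else 0)) := by
      intro j hj
      have hjk : (j : ℕ) ≠ (k : ℕ) := fun h => (Finset.mem_erase.mp hj).1 (Fin.ext h)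
      have hkj : (k : ℕ) ≠ (j : ℕ) := fun h => hjk h.symm
      simp only [hA, Matrix.of_apply, if_neg hkj]
      by_cases h1 : (k : ℕ) + 1 = (j : ℕ)
      · rw [if_pos h1, if_pos h1.symm, if_neg (by omega)]
        rw [Real.norm_eq_abs, hoff (k : ℕ)]
        simp [abs_nonneg]
      · rw [if_neg h1, if_neg (fun h : (j : ℕ) = (k : ℕ) + 1 => h1 h.symm)]
        by_cases h2 : (j : ℕ) + 1 = (k : ℕ)
        · rw [if_pos h2, if_pos h2]
          rw [Real.norm_eq_abs, hoff (j : ℕ)]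
          have hj1 : (j : ℕ) = (k : ℕ) - 1 := by omega
          rw [hj1]
          simp [abs_nonneg]
        · rw [if_neg h2, if_neg h2]
          simp
    calc (∑ j ∈ Finset.univ.erase k, ‖A k j‖) ≤
        ∑ j ∈ Finset.univ.erase k,
          ((if (j : ℕ) = (k : ℕ) + 1 then |V (k : ℕ)| else 0) +
            (if (j : ℕ) + 1 = (k : ℕ) then |V ((k : ℕ) - 1)| else 0)) :=
          Finset.sum_le_sum hstep
      _ ≤ ∑ j : Fin n,
          ((if (j : ℕ) = (k : ℕ) + 1 then |V (k : ℕ)| else 0) +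
            (if (j : ℕ) + 1 = (k : ℕ) then |V ((k : ℕ) - 1)| else 0)) := by
          apply Finset.sum_le_sum_of_subset_of_nonneg (Finset.erase_subset _ _)
          intro j _ _
          apply add_nonneg <;> split <;> simp [abs_nonneg]
      _ = (∑ j : Fin n, if (j : ℕ) = (k : ℕ) + 1 then |V (k : ℕ)| else 0) +
          (∑ j : Fin n, if (j : ℕ) + 1 = (k : ℕ) then |V ((k : ℕ) - 1)| else 0) :=
          Finset.sum_add_distrib
      _ ≤ _ := by
          apply add_le_add
          · rw [sum_ite_fin_val]
          · by_cases hk1 : 1 ≤ (k : ℕ)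
            · rw [if_pos hk1]
              have hcond : ∀ j : Fin n, ((j : ℕ) + 1 = (k : ℕ)) ↔ ((j : ℕ) = (k : ℕ) - 1) := by
                intro j; omega
              simp only [hcond]
              rw [sum_ite_fin_val, if_pos (by omega : (k : ℕ) - 1 < n)]
            · have hcond : ∀ j : Fin n, ¬((j : ℕ) + 1 = (k : ℕ)) := by
                intro j; omega
              simp only [hcond]
              simp [hk1]
  -- final arithmetic
  have hdiag : A k k = if (k : ℕ) + 1 < n then
      2 * (K + 1) * σ - 2 * (K + 1) * μ - 2 * (K + 1) * K * L
    else -(2 * (K + 1) * μ) - 2 * (K + 1) * K * L := by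
    simp only [hA, Matrix.of_apply, if_pos (rfl : ((k : Fin n) : ℕ) = ((k : Fin n) : ℕ))]
    by_cases h1 : (k : ℕ) + 1 < n
    · rw [if_pos h1, if_pos h1, hI1]
      simp
    · rw [if_neg h1, if_neg h1, hI2]
      simp
  have hkn : (k : ℕ) < n := k.isLt
  have hVk1 : 1 ≤ (k : ℕ) → V ((k : ℕ) - 1) = K * σ - K / (K - 1) * τ - (K - 1) ^ 2 * L := by
    intro hk1
    have hc : (((k : ℕ) - 1 : ℕ) : ℝ) = K - 1 := by
      rw [hK]; push_cast [Nat.cast_sub hk1]; ring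
    simp only [hV, hc]; ring
  have he2g : 1 ≤ (k : ℕ) →
      (-(2 * (S * M * L)) ≤ K / (K - 1) * τ ∧ K / (K - 1) * τ ≤ 2 * (S * M * L)) := by
    intro hk1
    have hc : (((k : ℕ) - 1 : ℕ) : ℝ) = K - 1 := by
      rw [hK]; push_cast [Nat.cast_sub hk1]; ring
    have he2 := abs_le.mp (le_trans (coeff_abs_le ((k : ℕ) - 1) τ)
      (by linarith : 2 * |τ| ≤ 2 * (S * M * L)))
    rw [hc] at he2
    have heq : ((K - 1) + 1) / (K - 1) * τ = K / (K - 1) * τ := by ring_nf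
    rw [heq] at he2
    exact he2
  have hK1g : 1 ≤ (k : ℕ) → (1 : ℝ) ≤ K := by
    intro hk1; rw [hK]; exact_mod_cast hk1
  have hKzg : ¬ 1 ≤ (k : ℕ) → K = 0 := by
    intro hk1; rw [hK]
    have : (k : ℕ) = 0 := by omega
    rw [this]; simp
  clear_value A V K S M L σ τ μ
  clear hA hV hK hSdef hMdef hLdef hσdef hτdef hμdef hlam hk hEig hoff hI1 hI2 hSb hMb hS₀ hM₀ habsL
  by_cases h1 : (k : ℕ) + 1 < n <;> by_cases hk1 : 1 ≤ (k : ℕ)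
  · -- interior row
    rw [if_pos h1, if_pos hk1] at hrow
    rw [hdiag, if_pos h1] at hlam_le
    rw [hVk, hVk1 hk1] at hrow
    obtain ⟨he2a, he2b⟩ := he2g hk1
    obtain ⟨he1a, he1b⟩ := he1
    have h2L : 0 ≤ 2 * (K + 1) * μ := by positivity
    rcases abs_cases ((K + 1) * σ - (K + 1) / K * τ - K ^ 2 * L) with ⟨ha, _⟩ | ⟨ha, _⟩ <;>
      rcases abs_cases (K * σ - K / (K - 1) * τ - (K - 1) ^ 2 * L) with ⟨hb, _⟩ | ⟨hb, _⟩ <;>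
      rw [ha, hb] at hrow <;>
      nlinarith [mul_nonneg hL (sq_nonneg (S - 2 * K)), mul_nonneg hL (sq_nonneg (S - K)),
        mul_nonneg hL (sq_nonneg (S - 2 * K - 2)), mul_nonneg hL (sq_nonneg K),
        mul_nonneg hL (sq_nonneg (K - 1)), mul_nonneg (mul_nonneg hS0 hM0) hL,
        mul_nonneg hS0 hL, mul_nonneg hK0 (sub_nonneg.mpr hσ2), mul_nonneg hK0 hL,
        mul_nonneg hK0 (by linarith : (0:ℝ) ≤ σ + S * L)]
  · -- first row, interior
    have hKz : K = 0 := hKzg hk1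
    have hV0 : V (k : ℕ) = σ := by
      rw [hVk, hKz]; norm_num
    rw [if_pos h1, if_neg hk1] at hrow
    rw [hdiag, if_pos h1] at hlam_le
    rw [hV0] at hrow
    rcases abs_cases σ with ⟨ha, _⟩ | ⟨ha, _⟩ <;> rw [ha] at hrow <;>
      nlinarith [mul_nonneg (mul_nonneg hS0 hM0) hL, mul_nonneg hS0 hL, sq_nonneg S,
        mul_nonneg hL (sq_nonneg S)]
  · -- last row, k >= 1
    rw [if_neg h1, if_pos hk1] at hrow
    rw [hdiag, if_neg h1] at hlam_le
    rw [hVk1 hk1] at hrow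
    obtain ⟨he2a, he2b⟩ := he2g hk1
    have h2L : 0 ≤ 2 * (K + 1) * μ := by positivity
    have hK1 : (1 : ℝ) ≤ K := hK1g hk1
    rcases abs_cases (K * σ - K / (K - 1) * τ - (K - 1) ^ 2 * L) with ⟨hb, _⟩ | ⟨hb, _⟩ <;>
      rw [hb] at hrow <;>
      nlinarith [mul_nonneg hL (sq_nonneg (S - 2 * K)), mul_nonneg hL (sq_nonneg (S - K)),
        mul_nonneg hL (sq_nonneg K), mul_nonneg hL (sq_nonneg (K - 1)),
        mul_nonneg (mul_nonneg hS0 hM0) hL, mul_nonneg hS0 hL,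
        mul_nonneg hK0 (sub_nonneg.mpr hσ2), mul_nonneg hK0 hL,
        mul_nonneg hK0 (by linarith : (0:ℝ) ≤ σ + S * L)]
  · -- 1x1 case : k = 0, n = 1
    have hKz : K = 0 := hKzg hk1
    rw [if_neg h1, if_neg hk1] at hrow
    rw [hdiag, if_neg h1] at hlam_le
    have hC0 : 0 ≤ (S ^ 2 + 3 * S + 2 + 4 * S * M) * L :=
      mul_nonneg (by have h1 := sq_nonneg S; have h2 := mul_nonneg hS0 hM0; linarith) hL
    rw [hKz] at hlam_le
    linarith [hrow, hμ0, hC0]
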